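/- For every integer d ≥ 5, the second level stabilizer Stab_{Γ_d}(2) of the Fabrykowski–Gupta group Γ_d equals the derived subgroup of the first level stabilizer: Stab_{Γ_d}(2) = [Stab_{Γ_d}(1), Stab_{Γ_d}(1)]. -/

import Mathlib

namespace FG

variable (d : ℕ) [NeZero d]

/-- The rooted-tree automorphism `a` of the `d`-regular rooted tree (vertex set: the free
monoid `{0,…,d-1}^*`), acting by `(x w)^a = ((x+1) mod d) w`. -/
def aFun : List (Fin d) → List (Fin d)
  | [] => []
  | x :: w => (x + 1) :: w

def aInv : List (Fin d) → List (Fin d)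
  | [] => []
  | x :: w => (x - 1) :: w

lemma aInv_aFun : ∀ w, aInv d (aFun d w) = w := by
  intro w; cases w <;> simp [aFun, aInv]

lemma aFun_aInv : ∀ w, aFun d (aInv d w) = w := by
  intro w; cases w <;> simp [aFun, aInv]

def aPerm : Equiv.Perm (List (Fin d)) :=
  ⟨aFun d, aInv d, aInv_aFun d, aFun_aInv d⟩

/-- The rooted-tree automorphism `r`:
`(0 w)^r = 0 w^a`, `(x w)^r = x w` for `1 ≤ x ≤ d-2`, `((d-1) w)^r = (d-1) w^r`. -/
def rFun : List (Fin d) → List (Fin d)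
  | [] => []
  | x :: w => if x = 0 then x :: aFun d w else if x = -1 then x :: rFun w else x :: w

def rInv : List (Fin d) → List (Fin d)
  | [] => []
  | x :: w => if x = 0 then x :: aInv d w else if x = -1 then x :: rInv w else x :: w

lemma rInv_rFun : ∀ w, rInv d (rFun d w) = w := by
  intro w
  induction w with
  | nil => simp [rFun, rInv]
  | cons x w ih =>
    by_cases h0 : x = 0
    · simp [rFun, rInv, h0, aInv_aFun]
    · by_cases h1 : x = -1
      · subst h1
        have hd : ¬ d = 1 := by simpa using h0
        simp [rFun, rInv, hd, ih]
      · simp [rFun, rInv, h0, h1]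

lemma rFun_rInv : ∀ w, rFun d (rInv d w) = w := by
  intro w
  induction w with
  | nil => simp [rFun, rInv]
  | cons x w ih =>
    by_cases h0 : x = 0
    · simp [rFun, rInv, h0, aFun_aInv]
    · by_cases h1 : x = -1
      · subst h1
        have hd : ¬ d = 1 := by simpa using h0
        simp [rFun, rInv, hd, ih]
      · simp [rFun, rInv, h0, h1]

def rPerm : Equiv.Perm (List (Fin d)) :=
  ⟨rFun d, rInv d, rInv_rFun d, rFun_rInv d⟩

/-- The Fabrykowski–Gupta group `Γ_d`, as the subgroup of the permutation group of the
free monoid `{0,…,d-1}^*` generated by the tree automorphisms `a` and `r`. -/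
def Gamma : Subgroup (Equiv.Perm (List (Fin d))) :=
  Subgroup.closure {aPerm d, rPerm d}

/-- The generator `a` as an element of `Γ_d`. -/
def aG : ↥(Gamma d) :=
  ⟨aPerm d, Subgroup.subset_closure (Set.mem_insert _ _)⟩

/-- The generator `r` as an element of `Γ_d`. -/
def rG : ↥(Gamma d) :=
  ⟨rPerm d, Subgroup.subset_closure (Set.mem_insert_iff.mpr (Or.inr rfl))⟩

/-- The `n`-th level stabilizer `Stab_{Γ_d}(n)`: all elements of `Γ_d` fixing every word
of length `n`. -/
def Stab (n : ℕ) : Subgroup ↥(Gamma d) where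
  carrier := { g | ∀ w : List (Fin d), w.length = n → (g : Equiv.Perm (List (Fin d))) w = w }
  one_mem' := by intro w _; rfl
  mul_mem' := by
    intro g h hg hh w hw
    have : ((g * h : ↥(Gamma d)) : Equiv.Perm (List (Fin d))) w
        = (g : Equiv.Perm (List (Fin d))) ((h : Equiv.Perm (List (Fin d))) w) := rfl
    rw [this, hh w hw, hg w hw]
  inv_mem' := by
    intro g hg w hw
    have h1 := hg w hw
    calc ((g⁻¹ : ↥(Gamma d)) : Equiv.Perm (List (Fin d))) w
        = (g : Equiv.Perm (List (Fin d)))⁻¹ ((g : Equiv.Perm (List (Fin d))) w) := by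
          rw [h1]; rfl
      _ = w := by simp

/-- The conjugate `g_i = r^{a^i} = a^{-i} r a^i` in `Γ_d`. -/
def gG (i : ℕ) : ↥(Gamma d) := (aG d ^ i)⁻¹ * rG d * aG d ^ i

end FG

/-!
Every element of `Γ_d` acts on words of length at most two by `x ↦ x + c`,
`x y ↦ (x + c) (y + t x)`. On `Stab(1)`, where `c = 0`, the vertex labels `t` form a
homomorphism to the abelian group `Fin d → Fin d` with kernel `Stab(2)`; hence
`[Stab(1), Stab(1)] ≤ Stab(2)`.

For the converse, the conjugates `g_i = r^{a^i}` generate a normal subgroup `N` (conjugation by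
`a⁻¹` shifts `i`, and `a^d = 1`), so `Γ_d = N ⟨a⟩`; since `a^k ∈ Stab(1)` forces `a^k = 1`, the
`g_i` generate `Stab(1)`. Each `g_i` satisfies `g_i^d = 1` and has as label vector the unit vector
at `-i`, so the label map is injective on the abelianization of `Stab(1)`: its kernel `Stab(2)` is
the commutator subgroup.
-/

theorem MonoidHom.ker_eq_commutator_of_closure_range_eq_top {G A ι : Type*} [Group G]
    [CommGroup A] [Fintype ι] {s : ι → G} (hs : Subgroup.closure (Set.range s) = ⊤)
    (f : G →* A) (hf : ∀ k : ι → ℤ, ∏ i, f (s i) ^ k i = 1 → ∀ i, s i ^ k i = 1) :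
    f.ker = commutator G := by
  refine le_antisymm (fun g hg => ?_) (Abelianization.commutator_subset_ker f)
  have hs' : Subgroup.closure (Set.range (Abelianization.of ∘ s)) = ⊤ := by
    rw [Set.range_comp, ← MonoidHom.map_closure, hs, ← MonoidHom.range_eq_map,
      MonoidHom.range_eq_top]
    exact QuotientGroup.mk_surjective
  obtain ⟨k, hk⟩ :=
    Subgroup.mem_closure_range_iff_of_fintype.mp (hs' ▸ Subgroup.mem_top (Abelianization.of g))
  have hfk : ∏ i, f (s i) ^ k i = 1 := by
    simpa [map_prod, MonoidHom.mem_ker.mp hg] using (congrArg (Abelianization.lift f) hk).symm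
  rw [← Abelianization.ker_of, MonoidHom.mem_ker, hk]
  exact Finset.prod_eq_one fun i _ => by simp [← map_zpow, hf k hfk i]

namespace FG

section

variable {d : ℕ} [NeZero d]
open Equiv Fin.NatCast Fin.CommRing Pointwise

-- The portrait of `g` on the first two levels: rotation by `c` at the root, by `t x` at `x`.
def HasLevelTwoLabels (g : Perm (List (Fin d))) (c : Fin d) (t : Fin d → Fin d) : Prop :=
  ∀ x y, g [x] = [x + c] ∧ g [x, y] = [x + c, y + t x]

def rootLabel (g : Perm (List (Fin d))) : Fin d := (g [0]).getD 0 0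

def vertexLabel (g : Perm (List (Fin d))) (x : Fin d) : Fin d := (g [x, 0]).getD 1 0

namespace HasLevelTwoLabels

variable {g h : Perm (List (Fin d))} {c c' : Fin d} {t t' : Fin d → Fin d}

lemma one : HasLevelTwoLabels (1 : Perm (List (Fin d))) 0 0 := fun x y => by simp

lemma mul (hg : HasLevelTwoLabels g c t) (hh : HasLevelTwoLabels h c' t') :
    HasLevelTwoLabels (g * h) (c' + c) (t' + t ∘ (· + c')) :=
  fun x y => by
  obtain ⟨hh₁, hh₂⟩ := hh x y
  obtain ⟨hg₁, hg₂⟩ := hg (x + c') (y + t' x)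
  simp only [Perm.mul_apply, hh₁, hh₂, hg₁, hg₂, Pi.add_apply, Function.comp_apply, add_assoc,
    and_self]

lemma inv (hg : HasLevelTwoLabels g c t) : HasLevelTwoLabels g⁻¹ (-c) (-(t ∘ (· - c))) :=
  fun x y => by
  obtain ⟨hg₁, hg₂⟩ := hg (x - c) (y - t (x - c))
  simp only [sub_add_cancel] at hg₁ hg₂
  simp only [Perm.inv_eq_iff_eq, Pi.neg_apply, Function.comp_apply, ← sub_eq_add_neg, hg₁,
    hg₂, and_self]

lemma aPerm : HasLevelTwoLabels (aPerm d) 1 0 := fun x y => by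
  simp [FG.aPerm, aFun]

lemma rPerm : HasLevelTwoLabels (rPerm d) 0 (Pi.single 0 1) := fun x y => by
  simp only [FG.rPerm, Equiv.coe_fn_mk, rFun, aFun, add_zero]
  split_ifs <;> simp_all

lemma rootLabel_eq (hg : HasLevelTwoLabels g c t) : rootLabel g = c := by
  simp [rootLabel, (hg 0 0).1]

lemma vertexLabel_eq (hg : HasLevelTwoLabels g c t) : vertexLabel g = t :=
  funext fun x => by simp [vertexLabel, (hg x 0).2]

lemma fixes_length_one_iff (hg : HasLevelTwoLabels g c t) :
    (∀ w : List (Fin d), w.length = 1 → g w = w) ↔ c = 0 := by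
  simp [List.length_eq_one_iff, hg _ 0]

lemma fixes_length_two_iff (hg : HasLevelTwoLabels g c t) :
    (∀ w : List (Fin d), w.length = 2 → g w = w) ↔ c = 0 ∧ t = 0 := by
  simp [List.length_eq_two, forall_comm (α := List (Fin d)), hg _ _, funext_iff,
    forall_and]

end HasLevelTwoLabels

lemma hasLevelTwoLabels_of_mem {g : Perm (List (Fin d))} (hg : g ∈ Gamma d) :
    HasLevelTwoLabels g (rootLabel g) (vertexLabel g) := by
  suffices ∃ c t, HasLevelTwoLabels g c t by
    obtain ⟨c, t, h⟩ := this
    rwa [h.rootLabel_eq, h.vertexLabel_eq]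
  induction hg using Subgroup.closure_induction with
  | mem g hg =>
    rcases hg with rfl | rfl
    exacts [⟨_, _, .aPerm⟩, ⟨_, _, .rPerm⟩]
  | one => exact ⟨_, _, .one⟩
  | mul g h _ _ hg hh =>
    obtain ⟨c, t, hg⟩ := hg
    obtain ⟨c', t', hh⟩ := hh
    exact ⟨_, _, hg.mul hh⟩
  | inv g _ hg =>
    obtain ⟨c, t, hg⟩ := hg
    exact ⟨_, _, hg.inv⟩

def rootLabelHom : Gamma d →* Multiplicative (Fin d) where
  toFun g := .ofAdd (rootLabel (g : Perm (List (Fin d))))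
  map_one' := rfl
  map_mul' g h := by
    rw [Subgroup.coe_mul,
      ((hasLevelTwoLabels_of_mem g.2).mul (hasLevelTwoLabels_of_mem h.2)).rootLabel_eq, add_comm]
    rfl

lemma mem_stab_one_iff (g : Gamma d) :
    g ∈ Stab d 1 ↔ rootLabel (g : Perm (List (Fin d))) = 0 :=
  (hasLevelTwoLabels_of_mem g.2).fixes_length_one_iff

lemma stab_one_eq_ker : Stab d 1 = (rootLabelHom (d := d)).ker := by
  ext g
  exact (mem_stab_one_iff g).trans ofAdd_eq_one.symm

lemma mem_stab_two_iff (g : Gamma d) :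
    g ∈ Stab d 2 ↔
      rootLabel (g : Perm (List (Fin d))) = 0 ∧ vertexLabel (g : Perm (List (Fin d))) = 0 :=
  (hasLevelTwoLabels_of_mem g.2).fixes_length_two_iff


lemma aPerm_pow_cons (n : ℕ) (x : Fin d) (w : List (Fin d)) :
    (aPerm d ^ n) (x :: w) = (x + n) :: w := by
  induction n with
  | zero => simp
  | succ n ih => rw [pow_succ', Perm.mul_apply, ih, Nat.cast_succ, ← add_assoc]; rfl

lemma aPerm_pow_self : aPerm d ^ d = 1 := by
  ext1 w
  cases w with
  | nil => exact Perm.pow_apply_eq_self_of_apply_eq_self rfl d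
  | cons x w => simp [aPerm_pow_cons]

lemma rPerm_pow_cons (n : ℕ) (x : Fin d) (w : List (Fin d)) :
    (rPerm d ^ n) (x :: w) =
      x :: if x = 0 then (aPerm d ^ n) w else if x = -1 then (rPerm d ^ n) w else w := by
  induction n generalizing w with
  | zero => simp
  | succ n ih =>
    rw [pow_succ', Perm.mul_apply, ih]
    split_ifs <;> simp_all [FG.rPerm, rFun, pow_succ', FG.aPerm]

lemma rPerm_pow_self : rPerm d ^ d = 1 := by
  ext1 w
  induction w with
  | nil => exact Perm.pow_apply_eq_self_of_apply_eq_self rfl d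
  | cons x w ih =>
    rw [rPerm_pow_cons]
    split_ifs <;> simp [aPerm_pow_self, ih]


lemma aG_pow_self : aG d ^ d = 1 := Subtype.ext aPerm_pow_self

lemma rG_pow_self : rG d ^ d = 1 := Subtype.ext rPerm_pow_self

lemma closure_aG_rG : Subgroup.closure {aG d, rG d} = ⊤ := by
  have h : ({aG d, rG d} : Set (Gamma d)) = (↑) ⁻¹' {aPerm d, rPerm d} := by
    ext g
    simp [aG, rG, Subtype.ext_iff]
  rw [h]
  exact Subgroup.closure_closure_coe_preimage

lemma gG_zero : gG d 0 = rG d := by simp [gG]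

lemma gG_pow_self (n : ℕ) : gG d n ^ d = 1 := by
  have := conj_pow (a := (aG d ^ n)⁻¹) (b := rG d) (i := d)
  rw [inv_inv] at this
  rw [gG, this, rG_pow_self, mul_one, inv_mul_cancel]

lemma gG_natCast_val (n : ℕ) : gG d ((n : Fin d) : ℕ) = gG d n := by
  simp only [gG, Fin.val_natCast, ← pow_eq_pow_mod n (aG_pow_self (d := d))]

lemma inv_aG_mul_gG_mul_aG (n : ℕ) : (aG d)⁻¹ * gG d n * aG d = gG d (n + 1) := by
  simp only [gG, pow_succ]
  group

lemma hasLevelTwoLabels_aPerm_pow (n : ℕ) : HasLevelTwoLabels (aPerm d ^ n) n 0 :=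
  fun x y => by simp [aPerm_pow_cons]

lemma hasLevelTwoLabels_gG (n : ℕ) :
    HasLevelTwoLabels (gG d n : Perm (List (Fin d))) 0 (Pi.single (-n) 1) := by
  have := ((hasLevelTwoLabels_aPerm_pow n).inv.mul (.rPerm (d := d))).mul
    (hasLevelTwoLabels_aPerm_pow n)
  show HasLevelTwoLabels ((aPerm d ^ n)⁻¹ * rPerm d * aPerm d ^ n) _ _
  convert this using 1
  · simp
  · ext x
    simp [Pi.single_apply, add_eq_zero_iff_eq_neg]

lemma gG_mem_stab_one (n : ℕ) : gG d n ∈ Stab d 1 :=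
  (mem_stab_one_iff _).mpr (hasLevelTwoLabels_gG n).rootLabel_eq


lemma eq_one_of_aG_zpow_mem_stab_one {k : ℤ} (hk : aG d ^ k ∈ Stab d 1) : aG d ^ k = 1 := by
  have ha : rootLabelHom (aG d) = .ofAdd 1 :=
    congrArg Multiplicative.ofAdd HasLevelTwoLabels.aPerm.rootLabel_eq
  rw [stab_one_eq_ker, MonoidHom.mem_ker, map_zpow, ha, ← ofAdd_zsmul, ofAdd_eq_one, zsmul_one,
    CharP.intCast_eq_zero_iff (Fin d) d] at hk
  obtain ⟨m, rfl⟩ := hk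
  rw [zpow_mul, zpow_natCast, aG_pow_self, one_zpow]

lemma closure_gG_normal : (Subgroup.closure (Set.range fun x : Fin d => gG d x)).Normal := by
  rw [← Subgroup.normalizer_eq_top_iff, eq_top_iff, ← closure_aG_rG, Subgroup.closure_le]
  have ha : (aG d)⁻¹ ∈ Subgroup.normalizer (Set.range fun x : Fin d => gG d x) := by
    refine Subgroup.mem_normalizer_fintype ?_
    rintro _ ⟨x, rfl⟩
    exact ⟨(x + 1 : ℕ), by rw [inv_inv, inv_aG_mul_gG_mul_aG]; exact gG_natCast_val _⟩
  rintro g (rfl | rfl)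
  · simpa using inv_mem (Subgroup.normalizer_le_normalizer_closure _ ha)
  · exact Subgroup.le_normalizer (Subgroup.subset_closure ⟨0, gG_zero⟩)

lemma closure_gG_eq_stab_one :
    Subgroup.closure (Set.range fun x : Fin d => gG d x) = Stab d 1 := by
  set N := Subgroup.closure (Set.range fun x : Fin d => gG d x)
  have hN : N ≤ Stab d 1 := (Subgroup.closure_le _).mpr <| by
    rintro _ ⟨x, rfl⟩
    exact gG_mem_stab_one x
  have : N.Normal := closure_gG_normal
  have htop : N ⊔ Subgroup.zpowers (aG d) = ⊤ := by
    rw [eq_top_iff, ← closure_aG_rG, Subgroup.closure_le]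
    rintro _ (rfl | rfl)
    · exact Subgroup.mem_sup_right (Subgroup.mem_zpowers _)
    · exact Subgroup.mem_sup_left (Subgroup.subset_closure ⟨0, gG_zero⟩)
  refine le_antisymm hN fun g hg => ?_
  obtain ⟨n, hn, _, ⟨k, rfl⟩, rfl⟩ :
      g ∈ (N : Set (Gamma d)) * (Subgroup.zpowers (aG d) : Set (Gamma d)) := by
    rw [← Subgroup.normal_mul, htop]
    trivial
  have hk : aG d ^ k ∈ Stab d 1 := by simpa using mul_mem (inv_mem (hN hn)) hg
  simpa [eq_one_of_aG_zpow_mem_stab_one hk] using hn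


def gStab (x : Fin d) : Stab d 1 := ⟨gG d x, gG_mem_stab_one x⟩

lemma closure_range_gStab : Subgroup.closure (Set.range (gStab (d := d))) = ⊤ := by
  apply Subgroup.map_injective (Stab d 1).subtype_injective
  rw [MonoidHom.map_closure, ← Set.range_comp, ← MonoidHom.range_eq_map, Subgroup.range_subtype]
  exact closure_gG_eq_stab_one

def vertexLabelHom : Stab d 1 →* Multiplicative (Fin d → Fin d) where
  toFun g := .ofAdd (vertexLabel ((g : Gamma d) : Equiv.Perm (List (Fin d))))
  map_one' := rfl
  map_mul' g h := by
    have hh := hasLevelTwoLabels_of_mem h.1.2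
    rw [(mem_stab_one_iff _).mp h.2] at hh
    rw [Subgroup.coe_mul, Subgroup.coe_mul,
      ((hasLevelTwoLabels_of_mem g.1.2).mul hh).vertexLabel_eq]
    simp only [add_zero, Function.comp_def, ofAdd_add, mul_comm]

lemma stab_two_eq_map_ker : Stab d 2 = (vertexLabelHom (d := d)).ker.map (Stab d 1).subtype := by
  ext g
  simp only [Subgroup.mem_map, MonoidHom.mem_ker, vertexLabelHom, MonoidHom.coe_mk,
    mem_stab_two_iff]
  constructor
  · rintro ⟨h₁, h₂⟩
    exact ⟨⟨g, (mem_stab_one_iff g).mpr h₁⟩, h₂, rfl⟩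
  · rintro ⟨h, h₂, rfl⟩
    exact ⟨(mem_stab_one_iff _).mp h.2, h₂⟩

lemma vertexLabelHom_gStab (x : Fin d) :
    vertexLabelHom (gStab x) = .ofAdd (Pi.single (-x) 1) := by
  have := (hasLevelTwoLabels_gG (d := d) x).vertexLabel_eq
  rw [Fin.cast_val_eq_self] at this
  exact congrArg Multiplicative.ofAdd this

lemma gStab_zpow_eq_one_of_prod (k : Fin d → ℤ) (hk : ∏ x, vertexLabelHom (gStab x) ^ k x = 1)
    (x : Fin d) : gStab x ^ k x = 1 := by
  have hx := congrFun (congrArg Multiplicative.toAdd hk) (-x)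
  simp only [vertexLabelHom_gStab, toAdd_prod, toAdd_zpow, toAdd_ofAdd, zsmul_eq_mul,
    Finset.sum_apply, Pi.mul_apply, Pi.intCast_apply, Pi.single_apply, neg_inj, mul_ite, mul_one,
    mul_zero, Finset.sum_ite_eq, Finset.mem_univ, ↓reduceIte, toAdd_one, Pi.zero_apply] at hx
  obtain ⟨m, hm⟩ := (CharP.intCast_eq_zero_iff (Fin d) d (k x)).mp hx
  rw [hm, zpow_mul, zpow_natCast, show gStab x ^ d = 1 from Subtype.ext (gG_pow_self x), one_zpow]

lemma ker_vertexLabelHom : (vertexLabelHom (d := d)).ker = commutator (Stab d 1) :=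
  MonoidHom.ker_eq_commutator_of_closure_range_eq_top closure_range_gStab _
    gStab_zpow_eq_one_of_prod

end

end FG

theorem stmt_7_general (d : ℕ) [NeZero d] :
    FG.Stab d 2 = ⁅FG.Stab d 1, FG.Stab d 1⁆ := by
  rw [FG.stab_two_eq_map_ker, FG.ker_vertexLabelHom, Subgroup.map_subtype_commutator]

/-- For every `d ≥ 5`, the second level stabilizer of `Γ_d` equals the derived subgroup of
the first level stabilizer. -/
theorem stmt_7 (d : ℕ) [NeZero d] (hd : 5 ≤ d) :
    FG.Stab d 2 = ⁅FG.Stab d 1, FG.Stab d 1⁆ :=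
  stmt_7_general d
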